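/- arXiv:2503.03169 — 3 statements merged into one kernel-verified Lean document; each statement's English description precedes it below -/
import Mathlib

section
/- Let q ∈ (1,2], T > 0, and f : [0,T] → ℝⁿ measurable with ‖f(τ)‖ ≤ P for a.e. τ ∈ [0,T], where P ≥ 0. Define φ(t) = (1/Γ(q)) ∫₀^t (t-τ)^{q-1} f(τ) dτ - (t/(Γ(q)T)) ∫₀^T (T-τ)^{q-1} f(τ) dτ. Then for all 0 ≤ t₁ ≤ t₂ ≤ T, ‖φ(t₂) - φ(t₁)‖ ≤ (P(2 + T^{q-1})/Γ(q+1))(t₂ - t₁) + (P/Γ(q+1))(t₂^q - t₁^q). In particular φ is continuous on [0,T]. -/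
/-!
Write `I^q f` for the Riemann–Liouville integral, so that `φ t = I^q f t - (t / T) • I^q f T`.
For `q ≥ 1` the kernel `(t - τ)^(q-1)` is nonnegative and nondecreasing in `t`, so
`Γ(q) (I^q f t₂ - I^q f t₁)` splits into the integral over `[0, t₁]` of the nonnegative kernel
difference against `f` and the integral over `[t₁, t₂]` of the kernel at `t₂` against `f`. Bounding
`‖f‖` by `P`, the two kernel integrals add up exactly to `(t₂^q - t₁^q) / q`, hence
`‖I^q f t₂ - I^q f t₁‖ ≤ P (t₂^q - t₁^q) / Γ(q+1)`; the case `t₁ = 0` bounds `‖I^q f T‖`, which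
controls the linear correction term. Continuity follows from the modulus being continuous.
-/

open MeasureTheory Real Set

section WeightedIntegral

variable {E : Type*} [NormedAddCommGroup E] [NormedSpace ℝ E] {f : ℝ → E} {g : ℝ → ℝ} {a b P : ℝ}

theorem intervalIntegrable_smul_of_norm_le (hab : a ≤ b) (hg : IntervalIntegrable g volume a b)
    (hf : AEStronglyMeasurable f (volume.restrict (Ioc a b)))
    (hbd : ∀ᵐ τ ∂volume.restrict (Ioc a b), ‖f τ‖ ≤ P) :
    IntervalIntegrable (fun τ => g τ • f τ) volume a b :=
  (intervalIntegrable_iff_integrableOn_Ioc_of_le hab).2 (hg.1.smul_bdd P hf hbd)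

theorem norm_integral_smul_le_of_norm_le (hab : a ≤ b) (hg : IntervalIntegrable g volume a b)
    (hg0 : ∀ τ ∈ Ioc a b, 0 ≤ g τ) (hbd : ∀ᵐ τ ∂volume.restrict (Ioc a b), ‖f τ‖ ≤ P) :
    ‖∫ τ in a..b, g τ • f τ‖ ≤ P * ∫ τ in a..b, g τ := by
  rw [← intervalIntegral.integral_const_mul]
  refine intervalIntegral.norm_integral_le_of_norm_le hab ?_ (hg.const_mul P)
  rw [← ae_restrict_iff' measurableSet_Ioc]
  filter_upwards [hbd, ae_restrict_mem measurableSet_Ioc] with τ hτ hτab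
  rw [norm_smul, norm_of_nonneg (hg0 τ hτab), mul_comm]
  exact mul_le_mul_of_nonneg_right hτ (hg0 τ hτab)

end WeightedIntegral

theorem continuous_sub_rpow_sub_one {q : ℝ} (hq : 1 ≤ q) (t : ℝ) :
    Continuous fun τ : ℝ => (t - τ) ^ (q - 1) :=
  (continuous_const.sub continuous_id).rpow_const fun _ => Or.inr (by linarith)

theorem integral_sub_rpow_sub_one {q : ℝ} (hq : 0 < q) (t a b : ℝ) :
    ∫ τ in a..b, (t - τ) ^ (q - 1) = ((t - a) ^ q - (t - b) ^ q) / q := by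
  rw [intervalIntegral.integral_comp_sub_left (fun x => x ^ (q - 1)) t,
    integral_rpow (Or.inl (by linarith)), sub_add_cancel]

theorem continuousOn_of_dist_le_sub {β : Type*} [PseudoMetricSpace β] {s : Set ℝ} {φ : ℝ → β}
    {ψ : ℝ → ℝ} (hψ : ContinuousOn ψ s)
    (h : ∀ x ∈ s, ∀ y ∈ s, x ≤ y → dist (φ y) (φ x) ≤ ψ y - ψ x) : ContinuousOn φ s := by
  have hdist : ∀ x ∈ s, ∀ y ∈ s, dist (φ y) (φ x) ≤ dist (ψ y) (ψ x) := by
    intro x hx y hy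
    rcases le_total x y with hxy | hyx
    · exact (h x hx y hy hxy).trans (le_abs_self _)
    · rw [dist_comm, dist_comm (ψ y)]
      exact (h y hy x hx hyx).trans (le_abs_self _)
  intro x hx
  have hψx := hψ x hx
  rw [Metric.continuousWithinAt_iff] at hψx ⊢
  intro ε hε
  obtain ⟨δ, hδ, hψδ⟩ := hψx ε hε
  exact ⟨δ, hδ, fun {y} hy hyx => (hdist x hx y hy).trans_lt (hψδ hy hyx)⟩

section RiemannLiouville

variable {E : Type*} [NormedAddCommGroup E] [NormedSpace ℝ E] {f : ℝ → E} {q P t₁ t₂ : ℝ}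

noncomputable def riemannLiouville (q : ℝ) (f : ℝ → E) (t : ℝ) : E :=
  (Gamma q)⁻¹ • ∫ τ in (0 : ℝ)..t, (t - τ) ^ (q - 1) • f τ

@[simp]
theorem riemannLiouville_zero (q : ℝ) (f : ℝ → E) : riemannLiouville q f 0 = 0 := by
  simp [riemannLiouville]

theorem norm_riemannLiouville_sub_le (hq : 1 ≤ q) (h0 : 0 ≤ t₁) (h12 : t₁ ≤ t₂)
    (hf : AEStronglyMeasurable f (volume.restrict (Ioc 0 t₂)))
    (hbd : ∀ᵐ τ ∂volume.restrict (Ioc 0 t₂), ‖f τ‖ ≤ P) :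
    ‖riemannLiouville q f t₂ - riemannLiouville q f t₁‖
      ≤ P / Gamma (q + 1) * (t₂ ^ q - t₁ ^ q) := by
  have hq0 : 0 < q := by linarith
  have hΓ : 0 < Gamma q := Gamma_pos_of_pos hq0
  have hk : ∀ t, Continuous fun τ : ℝ => (t - τ) ^ (q - 1) := continuous_sub_rpow_sub_one hq
  have hbd' : ∀ a b, 0 ≤ a → b ≤ t₂ → ∀ᵐ τ ∂volume.restrict (Ioc a b), ‖f τ‖ ≤ P :=
    fun a b ha hb => ae_restrict_of_ae_restrict_of_subset (Ioc_subset_Ioc ha hb) hbd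
  have hint : ∀ t a b, 0 ≤ a → a ≤ b → b ≤ t₂ →
      IntervalIntegrable (fun τ => (t - τ) ^ (q - 1) • f τ) volume a b :=
    fun t a b ha hab hb => intervalIntegrable_smul_of_norm_le hab ((hk t).intervalIntegrable a b)
      (hf.mono_measure (Measure.restrict_mono (Ioc_subset_Ioc ha hb) le_rfl)) (hbd' a b ha hb)
  have hsplit : Gamma q • (riemannLiouville q f t₂ - riemannLiouville q f t₁) =
      (∫ τ in (0 : ℝ)..t₁, ((t₂ - τ) ^ (q - 1) - (t₁ - τ) ^ (q - 1)) • f τ)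
        + ∫ τ in t₁..t₂, (t₂ - τ) ^ (q - 1) • f τ := by
    simp only [riemannLiouville, sub_smul]
    rw [smul_sub, smul_inv_smul₀ hΓ.ne', smul_inv_smul₀ hΓ.ne',
      ← intervalIntegral.integral_add_adjacent_intervals (hint t₂ 0 t₁ le_rfl h0 h12)
        (hint t₂ t₁ t₂ h0 h12 le_rfl),
      intervalIntegral.integral_sub (hint t₂ 0 t₁ le_rfl h0 h12) (hint t₁ 0 t₁ le_rfl h0 h12)]
    abel
  have hnear : ‖∫ τ in (0 : ℝ)..t₁, ((t₂ - τ) ^ (q - 1) - (t₁ - τ) ^ (q - 1)) • f τ‖ ≤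
      P * ∫ τ in (0 : ℝ)..t₁, ((t₂ - τ) ^ (q - 1) - (t₁ - τ) ^ (q - 1)) :=
    norm_integral_smul_le_of_norm_le h0 (((hk t₂).sub (hk t₁)).intervalIntegrable _ _)
      (fun τ hτ => sub_nonneg.2 (rpow_le_rpow (by linarith [hτ.2]) (by linarith) (by linarith)))
      (hbd' 0 t₁ le_rfl h12)
  have hfar : ‖∫ τ in t₁..t₂, (t₂ - τ) ^ (q - 1) • f τ‖ ≤ P * ∫ τ in t₁..t₂, (t₂ - τ) ^ (q - 1) :=
    norm_integral_smul_le_of_norm_le h12 ((hk t₂).intervalIntegrable _ _)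
      (fun τ hτ => rpow_nonneg (by linarith [hτ.2]) _) (hbd' t₁ t₂ h0 le_rfl)
  have hkernel : (∫ τ in (0 : ℝ)..t₁, ((t₂ - τ) ^ (q - 1) - (t₁ - τ) ^ (q - 1)))
      + ∫ τ in t₁..t₂, (t₂ - τ) ^ (q - 1) = (t₂ ^ q - t₁ ^ q) / q := by
    rw [intervalIntegral.integral_sub ((hk t₂).intervalIntegrable _ _)
      ((hk t₁).intervalIntegrable _ _), integral_sub_rpow_sub_one hq0,
      integral_sub_rpow_sub_one hq0, integral_sub_rpow_sub_one hq0]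
    simp only [sub_zero, sub_self, zero_rpow hq0.ne']
    ring
  calc ‖riemannLiouville q f t₂ - riemannLiouville q f t₁‖
      = (Gamma q)⁻¹ * ‖Gamma q • (riemannLiouville q f t₂ - riemannLiouville q f t₁)‖ := by
        rw [norm_smul, norm_of_nonneg hΓ.le, inv_mul_cancel_left₀ hΓ.ne']
    _ ≤ (Gamma q)⁻¹ * (P * (∫ τ in (0 : ℝ)..t₁, ((t₂ - τ) ^ (q - 1) - (t₁ - τ) ^ (q - 1)))
          + P * ∫ τ in t₁..t₂, (t₂ - τ) ^ (q - 1)) := by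
        rw [hsplit]
        gcongr
        exact (norm_add_le _ _).trans (add_le_add hnear hfar)
    _ = P / Gamma (q + 1) * (t₂ ^ q - t₁ ^ q) := by
        rw [← mul_add, hkernel, Gamma_add_one hq0.ne']
        field_simp

theorem norm_riemannLiouville_sub_interpolant_sub_le {T : ℝ} (hq : 1 ≤ q) (hT : 0 < T)
    (h0 : 0 ≤ t₁) (h12 : t₁ ≤ t₂) (h2T : t₂ ≤ T)
    (hf : AEStronglyMeasurable f (volume.restrict (Ioc 0 T)))
    (hbd : ∀ᵐ τ ∂volume.restrict (Ioc 0 T), ‖f τ‖ ≤ P) :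
    ‖(riemannLiouville q f t₂ - (t₂ / T) • riemannLiouville q f T)
        - (riemannLiouville q f t₁ - (t₁ / T) • riemannLiouville q f T)‖
      ≤ P / Gamma (q + 1) * (t₂ ^ q - t₁ ^ q) + P * T ^ (q - 1) / Gamma (q + 1) * (t₂ - t₁) := by
  have hsub : Ioc 0 t₂ ⊆ Ioc 0 T := Ioc_subset_Ioc le_rfl h2T
  have hincr := norm_riemannLiouville_sub_le hq h0 h12
    (hf.mono_measure (Measure.restrict_mono hsub le_rfl))
    (ae_restrict_of_ae_restrict_of_subset hsub hbd)
  have hend : ‖riemannLiouville q f T‖ ≤ P / Gamma (q + 1) * T ^ q := by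
    simpa [zero_rpow (by linarith : q ≠ 0)] using
      norm_riemannLiouville_sub_le hq le_rfl hT.le hf hbd
  have hTq : T ^ q = T ^ (q - 1) * T := by rw [← rpow_add_one hT.ne', sub_add_cancel]
  calc _ = ‖(riemannLiouville q f t₂ - riemannLiouville q f t₁)
          - ((t₂ - t₁) / T) • riemannLiouville q f T‖ := by
        congr 1
        module
    _ ≤ ‖riemannLiouville q f t₂ - riemannLiouville q f t₁‖
          + (t₂ - t₁) / T * ‖riemannLiouville q f T‖ := by
        refine (norm_sub_le _ _).trans_eq ?_
        rw [norm_smul, norm_of_nonneg (div_nonneg (sub_nonneg.2 h12) hT.le)]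
    _ ≤ P / Gamma (q + 1) * (t₂ ^ q - t₁ ^ q) + (t₂ - t₁) / T * (P / Gamma (q + 1) * T ^ q) := by
        gcongr
    _ = _ := by
        rw [hTq]
        field_simp

end RiemannLiouville

theorem stmt_1_general {n : ℕ} (q T P : ℝ) (hq1 : 1 < q) (hT : 0 < T) (hP : 0 ≤ P)
    (f : ℝ → EuclideanSpace ℝ (Fin n)) (hf : Measurable f)
    (hbd : ∀ᵐ τ ∂(volume.restrict (Set.Icc 0 T)), ‖f τ‖ ≤ P)
    (φ : ℝ → EuclideanSpace ℝ (Fin n))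
    (hφ : ∀ t, φ t = (1 / Real.Gamma q) • (∫ τ in (0:ℝ)..t, (t - τ) ^ (q - 1) • f τ)
        - (t / (Real.Gamma q * T)) • (∫ τ in (0:ℝ)..T, (T - τ) ^ (q - 1) • f τ)) :
    (∀ t₁ t₂ : ℝ, 0 ≤ t₁ → t₁ ≤ t₂ → t₂ ≤ T →
      ‖φ t₂ - φ t₁‖ ≤ P * (2 + T ^ (q - 1)) / Real.Gamma (q + 1) * (t₂ - t₁)
        + P / Real.Gamma (q + 1) * (t₂ ^ q - t₁ ^ q)) ∧
    ContinuousOn φ (Set.Icc 0 T) := by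
  have hφ' : ∀ t, φ t = riemannLiouville q f t - (t / T) • riemannLiouville q f T := by
    intro t
    rw [hφ, riemannLiouville, riemannLiouville, smul_smul]
    module
  have hΓ : 0 < Gamma (q + 1) := Gamma_pos_of_pos (by linarith)
  have hest : ∀ t₁ t₂ : ℝ, 0 ≤ t₁ → t₁ ≤ t₂ → t₂ ≤ T →
      ‖φ t₂ - φ t₁‖ ≤ P * (2 + T ^ (q - 1)) / Gamma (q + 1) * (t₂ - t₁)
        + P / Gamma (q + 1) * (t₂ ^ q - t₁ ^ q) := by
    intro t₁ t₂ h0 h12 h2T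
    rw [hφ', hφ']
    have h := norm_riemannLiouville_sub_interpolant_sub_le hq1.le hT h0 h12 h2T
      hf.aestronglyMeasurable (ae_restrict_of_ae_restrict_of_subset Ioc_subset_Icc_self hbd)
    have hslack : 0 ≤ P / Gamma (q + 1) * (t₂ - t₁) :=
      mul_nonneg (div_nonneg hP hΓ.le) (sub_nonneg.2 h12)
    linarith [show P * (2 + T ^ (q - 1)) / Gamma (q + 1) * (t₂ - t₁) =
      2 * (P / Gamma (q + 1) * (t₂ - t₁)) + P * T ^ (q - 1) / Gamma (q + 1) * (t₂ - t₁) by ring]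
  refine ⟨hest, continuousOn_of_dist_le_sub
    (ψ := fun t => P * (2 + T ^ (q - 1)) / Gamma (q + 1) * t + P / Gamma (q + 1) * t ^ q) ?_ ?_⟩
  · exact ((continuous_const.mul continuous_id).add
      (continuous_const.mul (continuous_id.rpow_const fun _ => Or.inr (by linarith)))).continuousOn
  · intro x hx y hy hxy
    rw [dist_eq_norm]
    exact (hest x y hx.1 hxy hy.2).trans_eq (by ring)

theorem stmt_1 {n : ℕ} (q T P : ℝ) (hq1 : 1 < q) (hq2 : q ≤ 2) (hT : 0 < T) (hP : 0 ≤ P)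
    (f : ℝ → EuclideanSpace ℝ (Fin n)) (hf : Measurable f)
    (hbd : ∀ᵐ τ ∂(volume.restrict (Set.Icc 0 T)), ‖f τ‖ ≤ P)
    (φ : ℝ → EuclideanSpace ℝ (Fin n))
    (hφ : ∀ t, φ t = (1 / Real.Gamma q) • (∫ τ in (0:ℝ)..t, (t - τ) ^ (q - 1) • f τ)
        - (t / (Real.Gamma q * T)) • (∫ τ in (0:ℝ)..T, (T - τ) ^ (q - 1) • f τ)) :
    (∀ t₁ t₂ : ℝ, 0 ≤ t₁ → t₁ ≤ t₂ → t₂ ≤ T →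
      ‖φ t₂ - φ t₁‖ ≤ P * (2 + T ^ (q - 1)) / Real.Gamma (q + 1) * (t₂ - t₁)
        + P / Real.Gamma (q + 1) * (t₂ ^ q - t₁ ^ q)) ∧
    ContinuousOn φ (Set.Icc 0 T) :=
  stmt_1_general q T P hq1 hT hP f hf hbd φ hφ
end

section
/- Let q ∈ (1,2], T > 0, L > 0, and let f₁, f₂ : [0,T] → ℝⁿ be measurable functions and y₁, y₂ : [0,T] → ℝⁿ continuous functions such that ‖f₁(τ) - f₂(τ)‖ ≤ L‖y₁(τ) - y₂(τ)‖ for all τ ∈ [0,T]. Define φᵢ(t) = (1/Γ(q)) ∫₀^t (t-τ)^{q-1} fᵢ(τ) dτ - (t/(Γ(q)T)) ∫₀^T (T-τ)^{q-1} fᵢ(τ) dτ for i = 1,2. Then sup_{t∈[0,T]} ‖φ₁(t) - φ₂(t)‖ ≤ (2 L T^q / Γ(q+1)) · sup_{t∈[0,T]} ‖y₁(t) - y₂(t)‖. -/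
/-!
Put `M = sup ‖y₁ - y₂‖`, so that `‖f₁ - f₂‖ ≤ L M` on `[0, T]`. Both terms of `φ₁ - φ₂` are
integrals of `f₁ - f₂` against the nonnegative kernel `(s - τ)^(q-1)`, whose integral over
`[0, s]` is `s^q / q ≤ T^q / q`; the coefficient `t / T` of the boundary term is at most `1`.
Hence each term is at most `L M T^q / (q Γ(q)) = L M T^q / Γ(q + 1)`.
-/

open MeasureTheory Real Set

section

variable {E : Type*} [NormedAddCommGroup E] [NormedSpace ℝ E]

/-- Only an inequality: if neither `f₁` nor `f₂` is integrable, both integrals are junk `0`. -/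
theorem norm_intervalIntegral_sub_le_of_intervalIntegrable_sub {a b : ℝ} {f₁ f₂ : ℝ → E}
    (h : IntervalIntegrable (fun x => f₁ x - f₂ x) volume a b) :
    ‖(∫ x in a..b, f₁ x) - ∫ x in a..b, f₂ x‖ ≤ ‖∫ x in a..b, f₁ x - f₂ x‖ := by
  by_cases h₂ : IntervalIntegrable f₂ volume a b
  · have h₁ : IntervalIntegrable f₁ volume a b := by simpa using h.add h₂
    rw [intervalIntegral.integral_sub h₁ h₂]
  · have h₁ : ¬IntervalIntegrable f₁ volume a b := fun h₁ => h₂ (by simpa using h₁.sub h)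
    simp [intervalIntegral.integral_undef h₁, intervalIntegral.integral_undef h₂]

theorem norm_integral_smul_sub_integral_smul_le {a b K : ℝ} {k : ℝ → ℝ} {f₁ f₂ : ℝ → E}
    (hab : a ≤ b) (hk : IntervalIntegrable k volume a b) (hk0 : ∀ x ∈ Ioc a b, 0 ≤ k x)
    (hf : AEStronglyMeasurable (f₁ - f₂) (volume.restrict (Ioc a b)))
    (hbound : ∀ x ∈ Ioc a b, ‖f₁ x - f₂ x‖ ≤ K) :
    ‖(∫ x in a..b, k x • f₁ x) - ∫ x in a..b, k x • f₂ x‖ ≤ K * ∫ x in a..b, k x := by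
  have hsmul : IntervalIntegrable (fun x => k x • f₁ x - k x • f₂ x) volume a b := by
    simp only [← smul_sub]
    rw [intervalIntegrable_iff_integrableOn_Ioc_of_le hab] at hk ⊢
    exact hk.smul_bdd K hf ((ae_restrict_mem measurableSet_Ioc).mono hbound)
  refine (norm_intervalIntegral_sub_le_of_intervalIntegrable_sub hsmul).trans ?_
  rw [← intervalIntegral.integral_const_mul]
  refine intervalIntegral.norm_integral_le_of_norm_le hab (.of_forall fun x hx => ?_)
    (hk.const_mul K)
  rw [← smul_sub, norm_smul, norm_of_nonneg (hk0 x hx), mul_comm]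
  exact mul_le_mul_of_nonneg_right (hbound x hx) (hk0 x hx)

theorem intervalIntegrable_sub_rpow {q : ℝ} (hq : 0 < q) (t : ℝ) :
    IntervalIntegrable (fun τ => (t - τ) ^ (q - 1)) volume 0 t := by
  simpa using (intervalIntegral.intervalIntegrable_rpow' (a := t) (b := 0)
    (by linarith : -1 < q - 1)).comp_sub_left t

theorem integral_sub_rpow {q : ℝ} (hq : 0 < q) (t : ℝ) :
    ∫ τ in (0:ℝ)..t, (t - τ) ^ (q - 1) = t ^ q / q := by
  rw [intervalIntegral.integral_comp_sub_left (fun x => x ^ (q - 1)) t, sub_self, sub_zero,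
    integral_rpow (Or.inl (by linarith)), sub_add_cancel, zero_rpow hq.ne', sub_zero]

theorem norm_integral_sub_rpow_smul_sub_le {q t K : ℝ} {f₁ f₂ : ℝ → E} (hq : 0 < q)
    (ht : 0 ≤ t) (hf : AEStronglyMeasurable (f₁ - f₂) (volume.restrict (Ioc 0 t)))
    (hbound : ∀ τ ∈ Ioc 0 t, ‖f₁ τ - f₂ τ‖ ≤ K) :
    ‖(∫ τ in (0:ℝ)..t, (t - τ) ^ (q - 1) • f₁ τ) - ∫ τ in (0:ℝ)..t, (t - τ) ^ (q - 1) • f₂ τ‖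
      ≤ K * (t ^ q / q) := by
  rw [← integral_sub_rpow hq]
  exact norm_integral_smul_sub_integral_smul_le ht (intervalIntegrable_sub_rpow hq t)
    (fun τ hτ => rpow_nonneg (sub_nonneg.2 hτ.2) _) hf hbound

end

theorem IsCompact.le_ciSup_of_continuousOn {α : Type*} [TopologicalSpace α] {s : Set α}
    {g : α → ℝ} (hs : IsCompact s) (hg : ContinuousOn g s) {x : α} (hx : x ∈ s) : g x ≤ ⨆ t : s, g t := by
  refine le_ciSup (f := fun t : s => g t) ?_ ⟨x, hx⟩
  simpa [image_eq_range] using hs.bddAbove_image hg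

theorem stmt_3_general {n : ℕ} (q T L : ℝ) (hq1 : 1 < q) (hT : 0 < T) (hL : 0 < L)
    (f₁ f₂ : ℝ → EuclideanSpace ℝ (Fin n)) (hf₁ : Measurable f₁) (hf₂ : Measurable f₂)
    (y₁ y₂ : ℝ → EuclideanSpace ℝ (Fin n))
    (hy₁ : ContinuousOn y₁ (Set.Icc 0 T)) (hy₂ : ContinuousOn y₂ (Set.Icc 0 T))
    (hLip : ∀ τ ∈ Set.Icc (0:ℝ) T, ‖f₁ τ - f₂ τ‖ ≤ L * ‖y₁ τ - y₂ τ‖)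
    (φ₁ φ₂ : ℝ → EuclideanSpace ℝ (Fin n))
    (hφ₁ : ∀ t, φ₁ t = (1 / Real.Gamma q) • (∫ τ in (0:ℝ)..t, (t - τ) ^ (q - 1) • f₁ τ)
        - (t / (Real.Gamma q * T)) • (∫ τ in (0:ℝ)..T, (T - τ) ^ (q - 1) • f₁ τ))
    (hφ₂ : ∀ t, φ₂ t = (1 / Real.Gamma q) • (∫ τ in (0:ℝ)..t, (t - τ) ^ (q - 1) • f₂ τ)
        - (t / (Real.Gamma q * T)) • (∫ τ in (0:ℝ)..T, (T - τ) ^ (q - 1) • f₂ τ)) :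
    (⨆ t : Set.Icc (0:ℝ) T, ‖φ₁ t - φ₂ t‖)
      ≤ (2 * L * T ^ q / Real.Gamma (q + 1)) * ⨆ t : Set.Icc (0:ℝ) T, ‖y₁ t - y₂ t‖ := by
  have hq : 0 < q := by linarith
  have hΓ : 0 < Gamma q := Gamma_pos_of_pos hq
  set M := ⨆ t : Icc (0:ℝ) T, ‖y₁ t - y₂ t‖
  have hM : 0 ≤ M := Real.iSup_nonneg fun _ => norm_nonneg _
  have hfM (τ) (hτ : τ ∈ Icc 0 T) : ‖f₁ τ - f₂ τ‖ ≤ L * M :=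
    (hLip τ hτ).trans <| mul_le_mul_of_nonneg_left
      (isCompact_Icc.le_ciSup_of_continuousOn (hy₁.sub hy₂).norm hτ) hL.le
  have hI (s) (hs : s ∈ Icc 0 T) :
      ‖(∫ τ in (0:ℝ)..s, (s - τ) ^ (q - 1) • f₁ τ) - ∫ τ in (0:ℝ)..s, (s - τ) ^ (q - 1) • f₂ τ‖
        ≤ L * M * (T ^ q / q) := by
    refine (norm_integral_sub_rpow_smul_sub_le hq hs.1 (hf₁.sub hf₂).aestronglyMeasurable
      fun τ hτ => hfM τ ⟨hτ.1.le, hτ.2.trans hs.2⟩).trans ?_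
    gcongr
    exacts [hs.1, hs.2]
  refine Real.iSup_le (fun t => ?_) (by positivity)
  rw [hφ₁, hφ₂, sub_sub_sub_comm, ← smul_sub, ← smul_sub]
  calc _ ≤ 1 / Gamma q * (L * M * (T ^ q / q)) + t / (Gamma q * T) * (L * M * (T ^ q / q)) := by
        have hc : 0 ≤ t / (Gamma q * T) := div_nonneg t.2.1 (by positivity)
        refine (norm_sub_le _ _).trans (add_le_add ?_ ?_)
        · rw [norm_smul, norm_of_nonneg (by positivity)]
          exact mul_le_mul_of_nonneg_left (hI t t.2) (by positivity)
        · rw [norm_smul, norm_of_nonneg hc]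
          exact mul_le_mul_of_nonneg_left (hI T ⟨hT.le, le_rfl⟩) hc
    _ ≤ 1 / Gamma q * (L * M * (T ^ q / q)) + 1 / Gamma q * (L * M * (T ^ q / q)) := by
        gcongr _ + ?_ * _
        rw [div_le_div_iff₀ (by positivity) hΓ]
        nlinarith [t.2.2]
    _ = 2 * L * T ^ q / Gamma (q + 1) * M := by
        rw [Gamma_add_one hq.ne']
        field_simp
        ring

theorem stmt_3 {n : ℕ} (q T L : ℝ) (hq1 : 1 < q) (hq2 : q ≤ 2) (hT : 0 < T) (hL : 0 < L)
    (f₁ f₂ : ℝ → EuclideanSpace ℝ (Fin n)) (hf₁ : Measurable f₁) (hf₂ : Measurable f₂)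
    (y₁ y₂ : ℝ → EuclideanSpace ℝ (Fin n))
    (hy₁ : ContinuousOn y₁ (Set.Icc 0 T)) (hy₂ : ContinuousOn y₂ (Set.Icc 0 T))
    (hLip : ∀ τ ∈ Set.Icc (0:ℝ) T, ‖f₁ τ - f₂ τ‖ ≤ L * ‖y₁ τ - y₂ τ‖)
    (φ₁ φ₂ : ℝ → EuclideanSpace ℝ (Fin n))
    (hφ₁ : ∀ t, φ₁ t = (1 / Real.Gamma q) • (∫ τ in (0:ℝ)..t, (t - τ) ^ (q - 1) • f₁ τ)
        - (t / (Real.Gamma q * T)) • (∫ τ in (0:ℝ)..T, (T - τ) ^ (q - 1) • f₁ τ))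
    (hφ₂ : ∀ t, φ₂ t = (1 / Real.Gamma q) • (∫ τ in (0:ℝ)..t, (t - τ) ^ (q - 1) • f₂ τ)
        - (t / (Real.Gamma q * T)) • (∫ τ in (0:ℝ)..T, (T - τ) ^ (q - 1) • f₂ τ)) :
    (⨆ t : Set.Icc (0:ℝ) T, ‖φ₁ t - φ₂ t‖)
      ≤ (2 * L * T ^ q / Real.Gamma (q + 1)) * ⨆ t : Set.Icc (0:ℝ) T, ‖y₁ t - y₂ t‖ :=
  stmt_3_general q T L hq1 hT hL f₁ f₂ hf₁ hf₂ y₁ y₂ hy₁ hy₂ hLip φ₁ φ₂ hφ₁ hφ₂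
end

section
/- Let K ⊆ ℝᵐ be nonempty, closed and convex, S : ℝᵐ → ℝᵐ continuous and monotone on K, and suppose there exists u₀ ∈ K with liminf_{u ∈ K, ‖u‖→∞} ⟨S(u), u − u₀⟩/‖u‖² > 0. Then for every b ∈ ℝᵐ the solution set of the variational inequality, {u ∈ K : ⟨b + S(u), v − u⟩ ≥ 0 for all v ∈ K}, is nonempty, convex, and compact. -/
open Filter Set Topology Metric Bornology
open scoped RealInnerProductSpace

/-!
Truncate `K` by a large closed ball `B`. Testing the inequality at `v = u₀` and using coercivity
bounds every solution a priori, so for `B` large enough any solution of the truncated problem lies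
in the interior of `B`, and a solution on `K ∩ B` that is interior to `B` solves the problem on `K`.

On the compact convex set `K ∩ B` we use Minty's trick instead of Brouwer's theorem: for a
continuous monotone operator the solutions are exactly the points `u` with `0 ≤ ⟪F v, v - u⟫` for
all `v`, an intersection of closed half-spaces. These have the finite intersection property: if
finitely many `v_i` had no common point, separating the image of `u ↦ (⟪F v_i, v_i - u⟫)_i` from
the nonnegative orthant yields weights `w_i ≥ 0` that monotonicity contradicts at the barycenter
of the `v_i`. The half-space description also makes the solution set convex and closed.
-/

theorem exists_pos_eventually_lt_of_liminf_pos {α : Type*} {f : α → ℝ} {l : Filter α}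
    (h : 0 < liminf f l) : ∃ c, 0 < c ∧ ∀ᶠ x in l, c < f x := by
  -- In `ℝ` a liminf that is not bounded below has the junk value `0`.
  have hbdd : l.IsBoundedUnder (· ≥ ·) f := by
    by_contra hf
    rw [Real.liminf_of_not_isBoundedUnder hf] at h
    exact lt_irrefl _ h
  obtain ⟨c, hc0, hc⟩ := exists_between h
  exact ⟨c, hc0, eventually_lt_of_lt_liminf hc hbdd⟩

theorem exists_nonneg_dotProduct_neg_of_disjoint_Ici {ι : Type*} [Fintype ι]
    {D : Set (ι → ℝ)} (hDc : IsCompact D) (hDv : Convex ℝ D) (hD : Disjoint D (Ici 0)) :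
    ∃ w : ι → ℝ, 0 ≤ w ∧ ∀ d ∈ D, w ⬝ᵥ d < 0 := by
  classical
  obtain ⟨f, α, β, hfD, hαβ, hfQ⟩ :=
    geometric_hahn_banach_compact_closed hDv hDc (convex_Ici 0) isClosed_Ici hD
  have hβ : β < 0 := by simpa using hfQ 0 (mem_Ici.2 le_rfl)
  set w : ι → ℝ := fun i => f (Pi.single i 1)
  refine ⟨w, fun i => ?_, fun d hd => ?_⟩
  · by_contra! hwi
    have hmem : (β / w i) • Pi.single i (1 : ℝ) ∈ Ici (0 : ι → ℝ) :=
      mem_Ici.2 (smul_nonneg (div_nonneg_of_nonpos hβ.le hwi.le) (Pi.single_nonneg.2 zero_le_one))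
    have := hfQ _ hmem
    rw [map_smul, smul_eq_mul, div_mul_cancel₀ _ hwi.ne] at this
    exact lt_irrefl _ this
  · have hf : f d = w ⬝ᵥ d := by
      rw [← ContinuousLinearMap.coe_coe, LinearMap.pi_apply_eq_sum_univ, dotProduct]
      refine Finset.sum_congr rfl fun i _ => ?_
      have hbasis : (fun j => if i = j then (1 : ℝ) else 0) = Pi.single i 1 := by
        ext j
        simp [Pi.single_apply, eq_comm]
      rw [hbasis, smul_eq_mul, mul_comm, ContinuousLinearMap.coe_coe]
    exact hf ▸ (hfD d hd).trans (hαβ.trans hβ)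

section VariationalInequality

variable {E : Type*} [NormedAddCommGroup E] [InnerProductSpace ℝ E] {K C : Set E} {F : E → E}

def InnerMonotoneOn (F : E → E) (K : Set E) : Prop :=
  ∀ u ∈ K, ∀ v ∈ K, 0 ≤ ⟪F u - F v, u - v⟫

def stampacchiaSolutions (K : Set E) (F : E → E) : Set E :=
  {u ∈ K | ∀ v ∈ K, 0 ≤ ⟪F u, v - u⟫}

def mintySolutions (K : Set E) (F : E → E) : Set E :=
  {u ∈ K | ∀ v ∈ K, 0 ≤ ⟪F v, v - u⟫}

theorem InnerMonotoneOn.mono (hF : InnerMonotoneOn F K) (hCK : C ⊆ K) : InnerMonotoneOn F C :=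
  fun u hu v hv => hF u (hCK hu) v (hCK hv)

theorem InnerMonotoneOn.const_add (hF : InnerMonotoneOn F K) (b : E) :
    InnerMonotoneOn (fun u => b + F u) K := fun u hu v hv => by
  simpa only [add_sub_add_left_eq_sub] using hF u hu v hv

theorem InnerMonotoneOn.inner_le_inner (hF : InnerMonotoneOn F K) {u v : E} (hu : u ∈ K)
    (hv : v ∈ K) : ⟪F v, u - v⟫ ≤ ⟪F u, u - v⟫ := by
  have := hF u hu v hv
  rw [inner_sub_left] at this
  linarith

theorem InnerMonotoneOn.sum_mul_inner_sub_centerMass_nonneg {ι : Type*} (hF : InnerMonotoneOn F K)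
    (hK : Convex ℝ K) {t : Finset ι} {w : ι → ℝ} {z : ι → E} (hw₀ : ∀ i ∈ t, 0 ≤ w i)
    (hw : 0 < ∑ i ∈ t, w i) (hz : ∀ i ∈ t, z i ∈ K) :
    0 ≤ ∑ i ∈ t, w i * ⟪F (z i), z i - t.centerMass w z⟫ := by
  set ū := t.centerMass w z
  have hū : ū ∈ K := hK.centerMass_mem hw₀ hw hz
  have hbalance : ∑ i ∈ t, w i • (z i - ū) = 0 := by
    simp only [smul_sub, Finset.sum_sub_distrib, ← Finset.sum_smul, ū, Finset.centerMass,
      smul_inv_smul₀ hw.ne', sub_self]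
  calc 0 = ⟪F ū, ∑ i ∈ t, w i • (z i - ū)⟫ := by rw [hbalance, inner_zero_right]
    _ = ∑ i ∈ t, w i * ⟪F ū, z i - ū⟫ := by simp only [inner_sum, real_inner_smul_right]
    _ ≤ ∑ i ∈ t, w i * ⟪F (z i), z i - ū⟫ := Finset.sum_le_sum fun i hi =>
      mul_le_mul_of_nonneg_left (hF.inner_le_inner (hz i hi) hū) (hw₀ i hi)

theorem InnerMonotoneOn.exists_forall_inner_sub_nonneg {ι : Type*} [Fintype ι]
    (hF : InnerMonotoneOn F C) (hCne : C.Nonempty) (hCc : IsCompact C) (hCv : Convex ℝ C)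
    (z : ι → E) (hz : ∀ i, z i ∈ C) : ∃ u ∈ C, ∀ i, 0 ≤ ⟪F (z i), z i - u⟫ := by
  by_contra! h
  let g : E →ᵃ[ℝ] (ι → ℝ) :=
    { toFun := fun u i => ⟪F (z i), z i - u⟫
      linear := -LinearMap.pi fun i => innerₛₗ ℝ (F (z i))
      map_vadd' := fun u v => by
        ext i
        simp only [vadd_eq_add, LinearMap.neg_apply, LinearMap.pi_apply, innerₛₗ_apply_apply,
          Pi.add_apply, Pi.neg_apply, inner_sub_right, inner_add_right]
        ring }
  have hgc : Continuous g := continuous_pi fun i => continuous_const.inner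
    (continuous_const.sub continuous_id)
  have hdisj : Disjoint (g '' C) (Ici 0) := by
    refine Set.disjoint_left.2 ?_
    rintro _ ⟨u, hu, rfl⟩ hnonneg
    obtain ⟨i, hi⟩ := h u hu
    exact hi.not_ge (hnonneg i)
  obtain ⟨w, hw₀, hw⟩ :=
    exists_nonneg_dotProduct_neg_of_disjoint_Ici (hCc.image hgc) (hCv.affine_image g) hdisj
  have hwneg : ∀ u ∈ C, ∑ i, w i * ⟪F (z i), z i - u⟫ < 0 := fun u hu => hw _ ⟨u, hu, rfl⟩
  have hwpos : 0 < ∑ i, w i := by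
    obtain ⟨u, hu⟩ := hCne
    refine (Finset.sum_nonneg fun i _ => hw₀ i).lt_of_ne fun hsum => (hwneg u hu).ne ?_
    have hw0 := (Finset.sum_eq_zero_iff_of_nonneg fun i _ => hw₀ i).1 hsum.symm
    simp [hw0]
  exact (hwneg _ (hCv.centerMass_mem (fun i _ => hw₀ i) hwpos fun i _ => hz i)).not_ge
    (hF.sum_mul_inner_sub_centerMass_nonneg hCv (fun i _ => hw₀ i) hwpos fun i _ => hz i)

theorem InnerMonotoneOn.mintySolutions_nonempty (hF : InnerMonotoneOn F C) (hCne : C.Nonempty)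
    (hCc : IsCompact C) (hCv : Convex ℝ C) : (mintySolutions C F).Nonempty := by
  obtain ⟨u, huC, hu⟩ := hCc.inter_iInter_nonempty (fun v : C => {u | 0 ≤ ⟪F v, v - u⟫})
    (fun v => isClosed_le continuous_const (continuous_const.inner
      (continuous_const.sub continuous_id))) fun s => by
    obtain ⟨u, huC, hu⟩ :=
      hF.exists_forall_inner_sub_nonneg hCne hCc hCv (fun v : s => (v : C).1) fun v => v.1.2
    exact ⟨u, huC, mem_iInter₂.2 fun v hv => hu ⟨v, hv⟩⟩
  exact ⟨u, huC, fun v hv => mem_iInter.1 hu ⟨v, hv⟩⟩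

theorem mintySolutions_subset_stampacchiaSolutions (hK : Convex ℝ K) (hF : Continuous F) :
    mintySolutions K F ⊆ stampacchiaSolutions K F := by
  rintro u ⟨huK, hu⟩
  refine ⟨huK, fun v hv => ?_⟩
  have hφ : Tendsto (fun s : ℝ => ⟪F (u + s • (v - u)), v - u⟫) (𝓝[>] 0) (𝓝 ⟪F u, v - u⟫) := by
    have : Continuous fun s : ℝ => ⟪F (u + s • (v - u)), v - u⟫ := by fun_prop
    simpa using (this.tendsto 0).mono_left nhdsWithin_le_nhds
  refine ge_of_tendsto hφ ?_
  filter_upwards [Ioc_mem_nhdsGT zero_lt_one] with s hs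
  have := hu _ (hK.add_smul_sub_mem huK hv ⟨hs.1.le, hs.2⟩)
  rw [add_sub_cancel_left, real_inner_smul_right] at this
  exact nonneg_of_mul_nonneg_right this hs.1

theorem InnerMonotoneOn.stampacchiaSolutions_subset_mintySolutions (hF : InnerMonotoneOn F K) :
    stampacchiaSolutions K F ⊆ mintySolutions K F := fun _ ⟨huK, hu⟩ =>
  ⟨huK, fun v hv => (hu v hv).trans (hF.inner_le_inner hv huK)⟩

theorem stampacchiaSolutions_eq_mintySolutions (hK : Convex ℝ K) (hFc : Continuous F)
    (hF : InnerMonotoneOn F K) : stampacchiaSolutions K F = mintySolutions K F :=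
  hF.stampacchiaSolutions_subset_mintySolutions.antisymm
    (mintySolutions_subset_stampacchiaSolutions hK hFc)

theorem mintySolutions_eq_inter_biInter :
    mintySolutions K F = K ∩ ⋂ v ∈ K, {u | ⟪F v, u⟫ ≤ ⟪F v, v⟫} := by
  ext u
  simp [mintySolutions, inner_sub_right]

theorem convex_mintySolutions (hK : Convex ℝ K) : Convex ℝ (mintySolutions K F) := by
  rw [mintySolutions_eq_inter_biInter]
  exact hK.inter (convex_iInter₂ fun v _ => convex_halfSpace_le (innerₛₗ ℝ (F v)).isLinear _)

theorem isClosed_mintySolutions (hK : IsClosed K) : IsClosed (mintySolutions K F) := by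
  rw [mintySolutions_eq_inter_biInter]
  exact hK.inter (isClosed_biInter fun v _ =>
    isClosed_le (continuous_const.inner continuous_id) continuous_const)

theorem mem_stampacchiaSolutions_of_mem_inter (hK : Convex ℝ K) {B : Set E} {u : E}
    (hB : B ∈ 𝓝 u) (hu : u ∈ stampacchiaSolutions (K ∩ B) F) : u ∈ stampacchiaSolutions K F := by
  refine ⟨hu.1.1, fun v hv => ?_⟩
  have hpath : Tendsto (fun s : ℝ => u + s • (v - u)) (𝓝[>] 0) (𝓝 u) := by
    have : Continuous fun s : ℝ => u + s • (v - u) := by fun_prop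
    simpa using (this.tendsto 0).mono_left nhdsWithin_le_nhds
  obtain ⟨s, hsB, hs⟩ := ((hpath.eventually_mem hB).and (Ioc_mem_nhdsGT zero_lt_one)).exists
  have := hu.2 _ ⟨hK.add_smul_sub_mem hu.1.1 hv ⟨hs.1.le, hs.2⟩, hsB⟩
  rw [add_sub_cancel_left, real_inner_smul_right] at this
  exact nonneg_of_mul_nonneg_right this hs.1

theorem isBounded_setOf_inner_nonneg_of_coercive {S : E → E} {u₀ : E} {c : ℝ} (hc : 0 < c)
    (hcoer : ∀ᶠ u in comap (fun u : E => ‖u‖) atTop ⊓ 𝓟 K, c < ⟪S u, u - u₀⟫ / ‖u‖ ^ 2) (b : E) :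
    IsBounded {u ∈ K | 0 ≤ ⟪b + S u, u₀ - u⟫} := by
  have hnorm : Tendsto (fun u : E => ‖u‖) (comap (fun u : E => ‖u‖) atTop) atTop := tendsto_comap
  rw [isBounded_def, ← comap_norm_atTop]
  filter_upwards [eventually_inf_principal.1 hcoer, hnorm.eventually_gt_atTop (2 * ‖b‖ / c),
    hnorm.eventually_ge_atTop ‖u₀‖] with u hcu hbu hu₀u
  rintro ⟨huK, hu⟩
  have hu0 : 0 < ‖u‖ := (div_nonneg (by positivity) hc.le).trans_lt hbu
  have hcu' : c * ‖u‖ ^ 2 < ⟪S u, u - u₀⟫ := (lt_div_iff₀ (by positivity)).1 (hcu huK)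
  have hbu' : 2 * ‖b‖ < c * ‖u‖ := by rw [div_lt_iff₀ hc] at hbu; linarith
  have hb : ⟪b, u₀ - u⟫ ≤ ‖b‖ * (‖u₀‖ + ‖u‖) :=
    (real_inner_le_norm _ _).trans (mul_le_mul_of_nonneg_left (norm_sub_le _ _) (norm_nonneg _))
  have hsplit : ⟪b + S u, u₀ - u⟫ = ⟪b, u₀ - u⟫ - ⟪S u, u - u₀⟫ := by
    simp only [inner_add_left, inner_sub_right]
    ring
  nlinarith [norm_nonneg b]

end VariationalInequality

theorem stmt_19_general {m : ℕ} (K : Set (EuclideanSpace ℝ (Fin m)))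
    (hcl : IsClosed K) (hconv : Convex ℝ K)
    (S : EuclideanSpace ℝ (Fin m) → EuclideanSpace ℝ (Fin m)) (hS : Continuous S)
    (hmono : ∀ u ∈ K, ∀ v ∈ K, (inner ℝ (S u - S v) (u - v) : ℝ) ≥ 0)
    (u₀ : EuclideanSpace ℝ (Fin m)) (hu₀ : u₀ ∈ K)
    (hcoer : 0 < Filter.liminf
      (fun u : EuclideanSpace ℝ (Fin m) => (inner ℝ (S u) (u - u₀) : ℝ) / ‖u‖ ^ 2)
      ((Filter.comap (fun u : EuclideanSpace ℝ (Fin m) => ‖u‖) Filter.atTop)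
        ⊓ Filter.principal K)) :
    ∀ b : EuclideanSpace ℝ (Fin m),
      ({u ∈ K | ∀ v ∈ K, (inner ℝ (b + S u) (v - u) : ℝ) ≥ 0}).Nonempty ∧
      Convex ℝ {u ∈ K | ∀ v ∈ K, (inner ℝ (b + S u) (v - u) : ℝ) ≥ 0} ∧
      IsCompact {u ∈ K | ∀ v ∈ K, (inner ℝ (b + S u) (v - u) : ℝ) ≥ 0} := by
  intro b
  set F := fun u => b + S u
  obtain ⟨c, hc, hcoer'⟩ := exists_pos_eventually_lt_of_liminf_pos hcoer
  obtain ⟨R, hR⟩ := (isBounded_setOf_inner_nonneg_of_coercive hc hcoer' b).subset_ball 0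
  have hFc : Continuous F := continuous_const.add hS
  have hF : InnerMonotoneOn F K := InnerMonotoneOn.const_add hmono b
  have hu₀R : u₀ ∈ closedBall 0 R := ball_subset_closedBall (hR ⟨hu₀, by simp⟩)
  have hCv : Convex ℝ (K ∩ closedBall 0 R) := hconv.inter (convex_closedBall 0 R)
  obtain ⟨u, hu⟩ := (hF.mono inter_subset_left).mintySolutions_nonempty ⟨u₀, hu₀, hu₀R⟩
    ((isCompact_closedBall 0 R).inter_left hcl) hCv
  have huC := mintySolutions_subset_stampacchiaSolutions hCv hFc hu
  have huR : u ∈ ball 0 R := hR ⟨huC.1.1, huC.2 u₀ ⟨hu₀, hu₀R⟩⟩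
  have hsol : stampacchiaSolutions K F ⊆ ball 0 R := fun w hw => hR ⟨hw.1, hw.2 u₀ hu₀⟩
  change (stampacchiaSolutions K F).Nonempty ∧ Convex ℝ (stampacchiaSolutions K F) ∧
    IsCompact (stampacchiaSolutions K F)
  have hminty := stampacchiaSolutions_eq_mintySolutions hconv hFc hF
  exact ⟨⟨u, mem_stampacchiaSolutions_of_mem_inter hconv (closedBall_mem_nhds_of_mem huR) huC⟩,
    hminty ▸ convex_mintySolutions hconv,
    isCompact_of_isClosed_isBounded (hminty ▸ isClosed_mintySolutions hcl)
      (isBounded_ball.subset hsol)⟩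

theorem stmt_19 {m : ℕ} (K : Set (EuclideanSpace ℝ (Fin m)))
    (hne : K.Nonempty) (hcl : IsClosed K) (hconv : Convex ℝ K)
    (S : EuclideanSpace ℝ (Fin m) → EuclideanSpace ℝ (Fin m)) (hS : Continuous S)
    (hmono : ∀ u ∈ K, ∀ v ∈ K, (inner ℝ (S u - S v) (u - v) : ℝ) ≥ 0)
    (u₀ : EuclideanSpace ℝ (Fin m)) (hu₀ : u₀ ∈ K)
    (hcoer : 0 < Filter.liminf
      (fun u : EuclideanSpace ℝ (Fin m) => (inner ℝ (S u) (u - u₀) : ℝ) / ‖u‖ ^ 2)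
      ((Filter.comap (fun u : EuclideanSpace ℝ (Fin m) => ‖u‖) Filter.atTop)
        ⊓ Filter.principal K)) :
    ∀ b : EuclideanSpace ℝ (Fin m),
      ({u ∈ K | ∀ v ∈ K, (inner ℝ (b + S u) (v - u) : ℝ) ≥ 0}).Nonempty ∧
      Convex ℝ {u ∈ K | ∀ v ∈ K, (inner ℝ (b + S u) (v - u) : ℝ) ≥ 0} ∧
      IsCompact {u ∈ K | ∀ v ∈ K, (inner ℝ (b + S u) (v - u) : ℝ) ≥ 0} :=
  stmt_19_general K hcl hconv S hS hmono u₀ hu₀ hcoer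
end
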